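/- If θ is a Pisot number (a real algebraic integer greater than 1 all of whose Galois conjugates other than itself have absolute value less than 1), then the distance from θ^n to the nearest integer tends to 0 as n → ∞. -/

import Mathlib

/-!
Let `K = ℚ⟮θ⟯`. The trace of the algebraic integer `θ ^ n` is an integer, and it is the sum of
`σ θ ^ n` over the embeddings `σ : K →ₐ[ℚ] ℂ`. The embedding through `ℝ` contributes `θ ^ n`; every
other one sends `θ` to a conjugate of modulus `< 1`, so the remaining terms tend to `0`, and `θ ^ n`
is within that distance of an integer.
-/

open Polynomial IntermediateField Filter Topology

/-- A Pisot number: a real algebraic integer `θ > 1` all of whose Galois conjugates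
other than `θ` itself have absolute value `< 1`. -/
def IsPisot (θ : ℝ) : Prop :=
  1 < θ ∧ IsIntegral ℤ θ ∧
    ∀ z ∈ ((minpoly ℤ θ).map (algebraMap ℤ ℂ)).roots, z ≠ (θ : ℂ) → ‖z‖ < 1

theorem tendsto_abs_sub_round_of_add_sum_pow_eq_intCast {ι : Type*} {s : Finset ι} {z : ι → ℂ}
    (hz : ∀ i ∈ s, ‖z i‖ < 1) {x : ℕ → ℝ} (hx : ∀ n, ∃ m : ℤ, (x n : ℂ) + ∑ i ∈ s, z i ^ n = m) :
    Tendsto (fun n => |x n - round (x n)|) atTop (𝓝 0) := by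
  have hsum : Tendsto (fun n => ∑ i ∈ s, ‖z i‖ ^ n) atTop (𝓝 0) := by
    simpa using tendsto_finsetSum s fun i hi =>
      tendsto_pow_atTop_nhds_zero_of_lt_one (norm_nonneg _) (hz i hi)
  refine squeeze_zero (fun n => abs_nonneg _) (fun n => ?_) hsum
  obtain ⟨m, hm⟩ := hx n
  calc |x n - round (x n)| ≤ |x n - m| := round_le _ _
    _ = ‖∑ i ∈ s, z i ^ n‖ := by
        rw [← Real.norm_eq_abs, ← Complex.norm_real, ← norm_neg, Complex.ofReal_sub,
          Complex.ofReal_intCast, ← hm, sub_add_cancel_left, neg_neg]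
    _ ≤ ∑ i ∈ s, ‖z i‖ ^ n := by simpa only [norm_pow] using norm_sum_le s (z · ^ n)

theorem exists_intCast_eq_sum_algHom {K E : Type*} [Field K] [Algebra ℚ K] [FiniteDimensional ℚ K]
    [Field E] [Algebra ℚ E] [IsAlgClosed E] {x : K} (hx : IsIntegral ℤ x) :
    ∃ m : ℤ, ∑ σ : K →ₐ[ℚ] E, σ x = m := by
  obtain ⟨m, hm⟩ := IsIntegrallyClosed.isIntegral_iff.mp (Algebra.isIntegral_trace (L := ℚ) hx)
  exact ⟨m, by rw [← trace_eq_sum_embeddings E, ← hm, eq_intCast, map_intCast]⟩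

theorem IntermediateField.AdjoinSimple.isIntegral_int_gen_iff {F L : Type*}
    [Field F] [Field L] [Algebra F L] {α : L} :
    IsIntegral ℤ (AdjoinSimple.gen F α) ↔ IsIntegral ℤ α := by
  rw [← isIntegral_algebraMap_iff (algebraMap F⟮α⟯ L).injective, AdjoinSimple.algebraMap_gen]

theorem IntermediateField.AdjoinSimple.algHom_gen_mem_aroots_minpoly_int {F L E : Type*}
    [Field F] [Field L] [Algebra F L] [CommRing E] [IsDomain E] [Algebra F E]
    {α : L} (hα : IsIntegral ℤ α) (σ : F⟮α⟯ →ₐ[F] E) :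
    σ (AdjoinSimple.gen F α) ∈ (minpoly ℤ α).aroots E := by
  have hgen := minpoly.algHom_eq (IsScalarTower.toAlgHom ℤ F⟮α⟯ L) (algebraMap F⟮α⟯ L).injective
    (AdjoinSimple.gen F α)
  rw [IsScalarTower.coe_toAlgHom', AdjoinSimple.algebraMap_gen] at hgen
  rw [hgen, mem_aroots']
  exact ⟨((minpoly.monic (isIntegral_int_gen_iff.2 hα)).map _).ne_zero,
    minpoly.aeval_algHom _ (σ.restrictScalars ℤ) _⟩

theorem pisot_pow_dist_nearest_int_tendsto_zero (θ : ℝ) (hθ : IsPisot θ) :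
    Filter.Tendsto (fun n : ℕ => |θ ^ n - round (θ ^ n)|) Filter.atTop (nhds 0) := by
  classical
  obtain ⟨-, hint, hconj⟩ := hθ
  have : FiniteDimensional ℚ ℚ⟮θ⟯ := adjoin.finiteDimensional hint.tower_top
  let τ : ℚ⟮θ⟯ →ₐ[ℚ] ℂ :=
    (Complex.ofRealAm.restrictScalars ℚ).comp (IsScalarTower.toAlgHom ℚ ℚ⟮θ⟯ ℝ)
  have hτ : τ (AdjoinSimple.gen ℚ θ) = θ :=
    congrArg Complex.ofReal (AdjoinSimple.algebraMap_gen ℚ θ)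
  refine tendsto_abs_sub_round_of_add_sum_pow_eq_intCast (s := Finset.univ.erase τ)
    (z := fun σ => σ (AdjoinSimple.gen ℚ θ)) (fun σ hσ => ?_) (fun n => ?_)
  · refine hconj _ (AdjoinSimple.algHom_gen_mem_aroots_minpoly_int hint σ) fun h =>
      Finset.ne_of_mem_erase hσ ?_
    exact adjoin_algHom_ext ℚ (by rintro x rfl; exact h.trans hτ.symm)
  · obtain ⟨m, hm⟩ := exists_intCast_eq_sum_algHom (E := ℂ)
      ((AdjoinSimple.isIntegral_int_gen_iff (F := ℚ)).2 hint |>.pow n)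
    refine ⟨m, ?_⟩
    rw [← hm, ← Finset.add_sum_erase _ _ (Finset.mem_univ τ)]
    simp only [map_pow, hτ, Complex.ofReal_pow]
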